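/- The one-parameter family of compatible Lie algebra structures L₁₀^α (α ∈ ℂ) on ℂ⁴, where L₁₀^α is given by [e₁,e₂]=e₃, [e₂,e₃]=e₄, {e₁,e₂}=α e₃, {e₁,e₃}=e₄, degenerates (as a parametric family) to the structure L₀₇ given by [e₁,e₂]=e₄, {e₁,e₂}=e₃, {e₂,e₃}=e₄. -/
import Mathlib


open Filter Matrix Topology

/-- ℂ⁴ -/
abbrev V4 : Type := Fin 4 → ℂ

/-- GL₄(ℂ) -/
abbrev GL4 := Matrix.GeneralLinearGroup (Fin 4) ℂ

/-- structure constants of a bilinear map on ℂ⁴: `μ i j` is the value on `(eᵢ, eⱼ)`. -/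
abbrev Bil4 := Fin 4 → Fin 4 → V4

/-- standard basis vectors -/
noncomputable def e4 (k : Fin 4) : V4 := Pi.single k (1 : ℂ)

/-- action of `g ∈ GL₄(ℂ)` on a bilinear map: `(g·μ)(x,y) = g μ(g⁻¹x, g⁻¹y)`,
in structure constants. -/
noncomputable def actBil (g : GL4) (μ : Bil4) : Bil4 := fun i j =>
  (g : Matrix (Fin 4) (Fin 4) ℂ).mulVec
    (∑ p, ∑ q,
      (((g⁻¹ : GL4) : Matrix (Fin 4) (Fin 4) ℂ) p i *
       ((g⁻¹ : GL4) : Matrix (Fin 4) (Fin 4) ℂ) q j) • μ p q)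

/-- the parametric family of pairs `(μ_α, ν_α)` of bilinear maps on ℂ⁴ degenerates to the
pair `(lam, rho)`. -/
def DegeneratesPairFam (μ ν : ℂ → Bil4) (lam rho : Bil4) : Prop :=
  ∃ f : ℂ → ℂ, ∃ g : ℂ → GL4,
    Tendsto (fun t => actBil (g t) (μ (f t))) (𝓝[≠] (0 : ℂ)) (𝓝 lam) ∧
    Tendsto (fun t => actBil (g t) (ν (f t))) (𝓝[≠] (0 : ℂ)) (𝓝 rho)

noncomputable def μL10 : Bil4 := fun i j =>
  if i = (0 : Fin 4) ∧ j = (1 : Fin 4) then e4 2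
  else if i = (1 : Fin 4) ∧ j = (0 : Fin 4) then -(e4 2)
  else if i = (1 : Fin 4) ∧ j = (2 : Fin 4) then e4 3
  else if i = (2 : Fin 4) ∧ j = (1 : Fin 4) then -(e4 3)
  else 0

noncomputable def νL10 (α : ℂ) : Bil4 := fun i j =>
  if i = (0 : Fin 4) ∧ j = (1 : Fin 4) then α • e4 2
  else if i = (1 : Fin 4) ∧ j = (0 : Fin 4) then -(α • e4 2)
  else if i = (0 : Fin 4) ∧ j = (2 : Fin 4) then e4 3
  else if i = (2 : Fin 4) ∧ j = (0 : Fin 4) then -(e4 3)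
  else 0

noncomputable def μL07 : Bil4 := fun i j =>
  if i = (0 : Fin 4) ∧ j = (1 : Fin 4) then e4 3
  else if i = (1 : Fin 4) ∧ j = (0 : Fin 4) then -(e4 3)
  else 0

noncomputable def νL07 : Bil4 := fun i j =>
  if i = (0 : Fin 4) ∧ j = (1 : Fin 4) then e4 2
  else if i = (1 : Fin 4) ∧ j = (0 : Fin 4) then -(e4 2)
  else if i = (1 : Fin 4) ∧ j = (2 : Fin 4) then e4 3
  else if i = (2 : Fin 4) ∧ j = (1 : Fin 4) then -(e4 3)
  else 0


noncomputable def Amat (t : ℂ) : Matrix (Fin 4) (Fin 4) ℂ :=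
  !![0, t⁻¹, 0, 0; 1, 0, 0, 0; -t⁻¹, 0, -1, 0; 0, 0, 0, -1]

noncomputable def Bmat (t : ℂ) : Matrix (Fin 4) (Fin 4) ℂ :=
  !![0, 1, 0, 0; t, 0, 0, 0; 0, -t⁻¹, -1, 0; 0, 0, 0, -1]

lemma hAB {t : ℂ} (ht : t ≠ 0) : Amat t * Bmat t = 1 := by
  ext i j
  fin_cases i <;> fin_cases j <;>
    simp [Amat, Bmat, Matrix.mul_apply, Fin.sum_univ_four, Matrix.one_apply,
      Matrix.vecHead, Matrix.vecTail] <;>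
    (try field_simp)

lemma hBA {t : ℂ} (ht : t ≠ 0) : Bmat t * Amat t = 1 := by
  ext i j
  fin_cases i <;> fin_cases j <;>
    simp [Amat, Bmat, Matrix.mul_apply, Fin.sum_univ_four, Matrix.one_apply,
      Matrix.vecHead, Matrix.vecTail] <;>
    (try field_simp) <;> (try ring)

noncomputable def gU (t : ℂ) : GL4 :=
  if ht : t = 0 then 1 else ⟨Amat t, Bmat t, hAB ht, hBA ht⟩

lemma gU_val {t : ℂ} (ht : t ≠ 0) : ((gU t : GL4) : Matrix (Fin 4) (Fin 4) ℂ) = Amat t := by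
  simp [gU, dif_neg ht]

lemma gU_inv_val {t : ℂ} (ht : t ≠ 0) :
    (((gU t)⁻¹ : GL4) : Matrix (Fin 4) (Fin 4) ℂ) = Bmat t := by
  simp [gU, dif_neg ht]

noncomputable def Fμ (t : ℂ) : Bil4 := fun i j =>
  if i = (0 : Fin 4) ∧ j = (1 : Fin 4) then t • e4 2 + e4 3
  else if i = (1 : Fin 4) ∧ j = (0 : Fin 4) then -(t • e4 2 + e4 3)
  else if i = (0 : Fin 4) ∧ j = (2 : Fin 4) then t • e4 3
  else if i = (2 : Fin 4) ∧ j = (0 : Fin 4) then -(t • e4 3)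
  else 0

set_option maxHeartbeats 4000000 in
lemma act_mu {t : ℂ} (ht : t ≠ 0) : actBil (gU t) μL10 = Fμ t := by
  funext i j k
  simp only [actBil, gU_val ht, gU_inv_val ht]
  fin_cases i <;> fin_cases j <;> fin_cases k <;>
    simp [μL10, Fμ, Amat, Bmat, e4, Matrix.mulVec, dotProduct,
      Fin.sum_univ_four, Finset.sum_apply, Pi.smul_apply, Pi.add_apply, Pi.neg_apply,
      smul_eq_mul, Pi.single_apply, Matrix.vecHead, Matrix.vecTail] <;>
    (try field_simp) <;> (try ring)

set_option maxHeartbeats 4000000 in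
lemma act_nu {t : ℂ} (ht : t ≠ 0) : actBil (gU t) (νL10 t⁻¹) = νL07 := by
  funext i j k
  simp only [actBil, gU_val ht, gU_inv_val ht]
  fin_cases i <;> fin_cases j <;> fin_cases k <;>
    simp [νL10, νL07, Amat, Bmat, e4, Matrix.mulVec, dotProduct,
      Fin.sum_univ_four, Finset.sum_apply, Pi.smul_apply, Pi.add_apply, Pi.neg_apply,
      smul_eq_mul, Pi.single_apply, Matrix.vecHead, Matrix.vecTail] <;>
    (try field_simp) <;> (try ring)

/-- the family L₁₀^α degenerates to L₀₇. -/
theorem stmt18 : DegeneratesPairFam (fun _ => μL10) νL10 μL07 νL07 := by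
  refine ⟨fun t => t⁻¹, gU, ?_, ?_⟩
  · have hF : Continuous Fμ := by
      apply continuous_pi; intro i; apply continuous_pi; intro j
      simp only [Fμ]
      split_ifs <;> fun_prop
    have h0 : Fμ 0 = μL07 := by
      funext i j
      simp only [Fμ, μL07, zero_smul, zero_add, neg_zero]
      split_ifs <;> simp
    have hT : Tendsto Fμ (𝓝[≠] (0:ℂ)) (𝓝 μL07) := by
      rw [← h0]
      exact (hF.tendsto 0).mono_left nhdsWithin_le_nhds
    refine hT.congr' ?_
    filter_upwards [self_mem_nhdsWithin] with t ht
    exact (act_mu ht).symm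
  · refine tendsto_const_nhds.congr' ?_
    filter_upwards [self_mem_nhdsWithin] with t ht
    exact (act_nu ht).symm
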